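/- arXiv:2509.15375 — 4 statements merged into one kernel-verified Lean document; each statement's English description precedes it below -/
import Mathlib

section
/- Let A be an additive subgroup of ℝ and let ρ : A → ℝ be an additive group homomorphism such that for all t ∈ A, ρ(t) > 0 if and only if t > 0. Then there exists a constant c > 0 such that ρ(t) = c·t for all t ∈ A. -/
/-- If `ρ : A →+ ℝ` is an additive homomorphism from an additive subgroup `A ≤ ℝ`
satisfying `ρ t > 0 ↔ t > 0`, then `ρ` is multiplication by a positive constant. -/
theorem stmt_0 (A : AddSubgroup ℝ) (ρ : A →+ ℝ)
    (h : ∀ t : A, 0 < ρ t ↔ 0 < (t : ℝ)) :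
    ∃ c : ℝ, 0 < c ∧ ∀ t : A, ρ t = c * (t : ℝ) := by
  by_cases hA : ∀ t : A, (t : ℝ) = 0
  · refine ⟨1, one_pos, fun t => ?_⟩
    have ht : t = 0 := by ext; exact hA t
    simp [ht]
  · push_neg at hA
    obtain ⟨b, hb⟩ := hA
    obtain ⟨a, ha⟩ : ∃ a : A, 0 < (a : ℝ) := by
      rcases lt_or_gt_of_ne hb with hb' | hb'
      · exact ⟨-b, by push_cast; linarith⟩
      · exact ⟨b, hb'⟩
    have hρa : 0 < ρ a := (h a).2 ha
    refine ⟨ρ a / a, div_pos hρa ha, fun t => ?_⟩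
    have key : ρ t * a = ρ a * t := by
      by_contra hne
      rcases lt_or_gt_of_ne hne with hlt | hgt
      · -- ρ t * a < ρ a * t
        have hdiv : ρ t / ρ a < (t : ℝ) / a := by
          rw [div_lt_div_iff₀ hρa ha]; linarith
        obtain ⟨r, hr1, hr2⟩ := exists_rat_btwn hdiv
        have hden : (0 : ℝ) < (r.den : ℝ) := by exact_mod_cast r.pos
        have hrcast : (r : ℝ) = (r.num : ℝ) / (r.den : ℝ) := by
          rw [Rat.cast_def]
        set u : A := (r.den : ℤ) • t - r.num • a with hu
        have hucoe : (u : ℝ) = (r.den : ℝ) * t - (r.num : ℝ) * a := by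
          push_cast [hu]; simp only [zsmul_eq_mul, smul_eq_mul]; push_cast; ring
        have hupos : 0 < (u : ℝ) := by
          rw [hucoe]
          have : (r.num : ℝ) / (r.den : ℝ) < (t : ℝ) / a := by
            rw [← hrcast]; exact hr2
          rw [div_lt_div_iff₀ hden ha] at this
          linarith
        have hρu : ρ u = (r.den : ℝ) * ρ t - (r.num : ℝ) * ρ a := by
          rw [hu, map_sub, map_zsmul, map_zsmul]; simp only [zsmul_eq_mul, smul_eq_mul]; push_cast; ring
        have h1 : ρ t / ρ a < (r.num : ℝ) / (r.den : ℝ) := by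
          rw [← hrcast]; exact hr1
        rw [div_lt_div_iff₀ hρa hden] at h1
        have := (h u).2 hupos
        rw [hρu] at this
        linarith
      · -- ρ a * t < ρ t * a
        have hdiv : (t : ℝ) / a < ρ t / ρ a := by
          rw [div_lt_div_iff₀ ha hρa]; linarith
        obtain ⟨r, hr1, hr2⟩ := exists_rat_btwn hdiv
        have hden : (0 : ℝ) < (r.den : ℝ) := by exact_mod_cast r.pos
        have hrcast : (r : ℝ) = (r.num : ℝ) / (r.den : ℝ) := by
          rw [Rat.cast_def]
        set u : A := r.num • a - (r.den : ℤ) • t with hu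
        have hucoe : (u : ℝ) = (r.num : ℝ) * a - (r.den : ℝ) * t := by
          push_cast [hu]; simp only [zsmul_eq_mul, smul_eq_mul]; push_cast; ring
        have hupos : 0 < (u : ℝ) := by
          rw [hucoe]
          have : (t : ℝ) / a < (r.num : ℝ) / (r.den : ℝ) := by
            rw [← hrcast]; exact hr1
          rw [div_lt_div_iff₀ ha hden] at this
          linarith
        have hρu : ρ u = (r.num : ℝ) * ρ a - (r.den : ℝ) * ρ t := by
          rw [hu, map_sub, map_zsmul, map_zsmul]; simp only [zsmul_eq_mul, smul_eq_mul]; push_cast; ring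
        have h1 : (r.num : ℝ) / (r.den : ℝ) < ρ t / ρ a := by
          rw [← hrcast]; exact hr2
        rw [div_lt_div_iff₀ hden hρa] at h1
        have := (h u).2 hupos
        rw [hρu] at this
        linarith
    field_simp
    linarith
end

section
/- Let G be a group of strictly increasing continuous bijections of ℝ such that every nontrivial element of G has at most one fixed point, and suppose there exists a point p ∈ ℝ fixed by every element of G. Then G is abelian. -/
namespace Solodov11

variable {G : Subgroup (Equiv.Perm ℝ)} {p : ℝ}

lemma fix_eq_one (honefix : ∀ g ∈ G, g ≠ 1 → ∀ x y : ℝ, g x = x → g y = y → x = y)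
    (hp : ∀ g ∈ G, g p = p) {g : Equiv.Perm ℝ} (hg : g ∈ G) {x : ℝ}
    (hx : x ≠ p) (hfix : g x = x) : g = 1 := by
  by_contra h1
  exact hx (honefix g hg h1 x p hfix (hp g hg))

lemma ivt_core (hcont : ∀ g ∈ G, Continuous (g : ℝ → ℝ))
    (honefix : ∀ g ∈ G, g ≠ 1 → ∀ x y : ℝ, g x = x → g y = y → x = y)
    (hp : ∀ g ∈ G, g p = p) {g : Equiv.Perm ℝ} (hg : g ∈ G) {x y : ℝ}
    (hx : p < x) (hy : p < y) (h1 : g x < x) (h2 : y < g y) : False := by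
  have hc : Continuous (fun t => (g : ℝ → ℝ) t - t) := (hcont g hg).sub continuous_id
  have h0 : (0 : ℝ) ∈ Set.uIcc ((fun t => (g : ℝ → ℝ) t - t) x) ((fun t => (g : ℝ → ℝ) t - t) y) := by
    rw [Set.mem_uIcc]
    left
    constructor <;> simp <;> linarith
  obtain ⟨z, hz, hz0⟩ := intermediate_value_uIcc hc.continuousOn h0
  have hzp : p < z := by
    rcases Set.mem_uIcc.mp hz with ⟨h, _⟩ | ⟨h, _⟩ <;> linarith
  have hfix : g z = z := by simpa [sub_eq_zero] using hz0
  have : g = 1 := fix_eq_one honefix hp hg hzp.ne' hfix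
  rw [this] at h1
  simp at h1

lemma transfer_le (hcont : ∀ g ∈ G, Continuous (g : ℝ → ℝ))
    (honefix : ∀ g ∈ G, g ≠ 1 → ∀ x y : ℝ, g x = x → g y = y → x = y)
    (hp : ∀ g ∈ G, g p = p) {g : Equiv.Perm ℝ} (hg : g ∈ G) {x y : ℝ}
    (hx : p < x) (hy : p < y) (h1 : g x ≤ x) : g y ≤ y := by
  by_contra h2
  push_neg at h2
  rcases h1.lt_or_eq with h1' | h1'
  · exact ivt_core hcont honefix hp hg hx hy h1' h2
  · have : g = 1 := fix_eq_one honefix hp hg hx.ne' h1'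
    rw [this] at h2; simp at h2

lemma transfer_lt (hcont : ∀ g ∈ G, Continuous (g : ℝ → ℝ))
    (honefix : ∀ g ∈ G, g ≠ 1 → ∀ x y : ℝ, g x = x → g y = y → x = y)
    (hp : ∀ g ∈ G, g p = p) {g : Equiv.Perm ℝ} (hg : g ∈ G) {x y : ℝ}
    (hx : p < x) (hy : p < y) (h1 : g x < x) : g y < y := by
  rcases (transfer_le hcont honefix hp hg hx hy h1.le).lt_or_eq with h | h
  · exact h
  · have : g = 1 := fix_eq_one honefix hp hg hy.ne' h
    rw [this] at h1; simp at h1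

lemma transfer_gt (hcont : ∀ g ∈ G, Continuous (g : ℝ → ℝ))
    (honefix : ∀ g ∈ G, g ≠ 1 → ∀ x y : ℝ, g x = x → g y = y → x = y)
    (hp : ∀ g ∈ G, g p = p) {g : Equiv.Perm ℝ} (hg : g ∈ G) {x y : ℝ}
    (hx : p < x) (hy : p < y) (h1 : x < g x) : y < g y := by
  by_contra h2
  push_neg at h2
  exact absurd (transfer_le hcont honefix hp hg hy hx h2) (not_le_of_gt h1)

lemma transfer_ge (hcont : ∀ g ∈ G, Continuous (g : ℝ → ℝ))
    (honefix : ∀ g ∈ G, g ≠ 1 → ∀ x y : ℝ, g x = x → g y = y → x = y)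
    (hp : ∀ g ∈ G, g p = p) {g : Equiv.Perm ℝ} (hg : g ∈ G) {x y : ℝ}
    (hx : p < x) (hy : p < y) (h1 : x ≤ g x) : y ≤ g y := by
  by_contra h2
  push_neg at h2
  exact absurd h1 (not_le_of_gt (transfer_lt hcont honefix hp hg hy hx h2))

lemma maps_gt (hmono : ∀ g ∈ G, StrictMono (g : ℝ → ℝ))
    (hp : ∀ g ∈ G, g p = p) {g : Equiv.Perm ℝ} (hg : g ∈ G) {x : ℝ}
    (hx : p < x) : p < g x := by
  have := (hmono g hg) hx
  rwa [hp g hg] at this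

lemma pow_pos_pt (hmono : ∀ g ∈ G, StrictMono (g : ℝ → ℝ))
    (hp : ∀ g ∈ G, g p = p) {h : Equiv.Perm ℝ} (hh : h ∈ G) {x : ℝ} (hx : p < x) :
    ∀ n : ℕ, p < (h ^ n : Equiv.Perm ℝ) x := by
  intro n
  induction n with
  | zero => simpa using hx
  | succ n ih =>
    have e : (h ^ (n + 1) : Equiv.Perm ℝ) x = h ((h ^ n : Equiv.Perm ℝ) x) := by
      rw [pow_succ']; rfl
    rw [e]
    have := (hmono h hh) ih
    rwa [hp h hh] at this

lemma arch (hmono : ∀ g ∈ G, StrictMono (g : ℝ → ℝ))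
    (hcont : ∀ g ∈ G, Continuous (g : ℝ → ℝ))
    (honefix : ∀ g ∈ G, g ≠ 1 → ∀ x y : ℝ, g x = x → g y = y → x = y)
    (hp : ∀ g ∈ G, g p = p) {h : Equiv.Perm ℝ} (hh : h ∈ G) {x0 : ℝ}
    (hx0 : p < x0) (hpos : x0 < h x0) (B : ℝ) :
    ∃ n : ℕ, B < (h ^ n : Equiv.Perm ℝ) x0 := by
  by_contra hB
  push_neg at hB
  set u : ℕ → ℝ := fun n => (h ^ n : Equiv.Perm ℝ) x0 with hu
  have hup : ∀ n, p < u n := pow_pos_pt hmono hp hh hx0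
  have hustep : ∀ n, u (n + 1) = h (u n) := by
    intro n
    show (h ^ (n + 1) : Equiv.Perm ℝ) x0 = h ((h ^ n : Equiv.Perm ℝ) x0)
    rw [pow_succ']; rfl
  have humono : Monotone u := by
    apply monotone_nat_of_le_succ
    intro n
    rw [hustep n]
    exact (transfer_gt hcont honefix hp hh hx0 (hup n) hpos).le
  have hbdd : BddAbove (Set.range u) := ⟨B, by rintro _ ⟨n, rfl⟩; exact hB n⟩
  have hlim : Filter.Tendsto u Filter.atTop (nhds (⨆ n, u n)) :=
    tendsto_atTop_ciSup humono hbdd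
  set L := ⨆ n, u n with hL
  have hlim2 : Filter.Tendsto (fun n => u (n + 1)) Filter.atTop (nhds L) :=
    hlim.comp (Filter.tendsto_add_atTop_nat 1)
  have hlim3 : Filter.Tendsto (fun n => h (u n)) Filter.atTop (nhds (h L)) :=
    ((hcont h hh).tendsto L).comp hlim
  have hfix : h L = L := by
    apply tendsto_nhds_unique _ hlim2
    simpa [hustep] using hlim3
  have hLx0 : x0 ≤ L := by
    have := le_ciSup hbdd 0
    simpa [hu] using this
  have : h = 1 := fix_eq_one honefix hp hh (hx0.trans_le hLx0).ne' hfix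
  rw [this] at hpos
  simp at hpos

lemma sandwich (hmono : ∀ g ∈ G, StrictMono (g : ℝ → ℝ))
    (hcont : ∀ g ∈ G, Continuous (g : ℝ → ℝ))
    (honefix : ∀ g ∈ G, g ≠ 1 → ∀ x y : ℝ, g x = x → g y = y → x = y)
    (hp : ∀ g ∈ G, g p = p) {h : Equiv.Perm ℝ} (hh : h ∈ G) {x0 : ℝ}
    (hx0 : p < x0) (hpos : x0 < h x0) {a : Equiv.Perm ℝ} (ha : a ∈ G)
    (hax : x0 ≤ a x0) :
    ∃ m : ℕ, (h ^ m : Equiv.Perm ℝ) x0 ≤ a x0 ∧ a x0 < (h ^ (m + 1) : Equiv.Perm ℝ) x0 := by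
  classical
  have hex : ∃ n : ℕ, a x0 < (h ^ n : Equiv.Perm ℝ) x0 :=
    arch hmono hcont honefix hp hh hx0 hpos (a x0)
  have hN : a x0 < (h ^ Nat.find hex : Equiv.Perm ℝ) x0 := Nat.find_spec hex
  have hN0 : Nat.find hex ≠ 0 := by
    intro h0
    rw [h0] at hN
    simp at hN
    linarith
  obtain ⟨m, hm⟩ := Nat.exists_eq_succ_of_ne_zero hN0
  refine ⟨m, ?_, by rw [← Nat.succ_eq_add_one, ← hm]; exact hN⟩
  have := Nat.find_min hex (m := m) (by omega)
  push_neg at this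
  exact this

lemma key (hmono : ∀ g ∈ G, StrictMono (g : ℝ → ℝ))
    (hcont : ∀ g ∈ G, Continuous (g : ℝ → ℝ))
    (honefix : ∀ g ∈ G, g ≠ 1 → ∀ x y : ℝ, g x = x → g y = y → x = y)
    (hp : ∀ g ∈ G, g p = p) {x0 : ℝ} (hx0 : p < x0) :
    ∀ a ∈ G, ∀ b ∈ G, x0 < a x0 → x0 < b x0 → a * b = b * a := by
  have papp : ∀ (h' : Equiv.Perm ℝ) (i j : ℕ) (x : ℝ),
      (h' ^ i : Equiv.Perm ℝ) ((h' ^ j : Equiv.Perm ℝ) x) = (h' ^ (i + j) : Equiv.Perm ℝ) x := by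
    intros h' i j x
    rw [pow_add, Equiv.Perm.mul_apply]
  have hlt : ∀ a ∈ G, ∀ b ∈ G, x0 < a x0 → x0 < b x0 → ¬ ((b * a) x0 < (a * b) x0) := by
    intro a ha b hb pa pb hc
    by_cases hmin : ∃ s ∈ G, x0 < s x0 ∧ ∀ t ∈ G, x0 < t x0 → s x0 ≤ t x0
    · -- least positive element: cyclic case
      obtain ⟨s, hs, ps, hsmin⟩ := hmin
      have hpow : ∀ g ∈ G, x0 ≤ g x0 → ∃ n : ℕ, g = s ^ n := by
        intro g hg hgx
        obtain ⟨m, h1, h2⟩ := sandwich hmono hcont honefix hp hs hx0 ps hg hgx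
        have hsmG : (s ^ m : Equiv.Perm ℝ) ∈ G := pow_mem hs m
        have htG : (s ^ m)⁻¹ * g ∈ G := mul_mem (inv_mem hsmG) hg
        have ht1 : x0 ≤ ((s ^ m)⁻¹ * g) x0 := by
          have := (hmono _ (inv_mem hsmG)).monotone h1
          simpa [Equiv.Perm.mul_apply, Equiv.Perm.coe_inv, Equiv.symm_apply_apply] using this
        have ht2 : ((s ^ m)⁻¹ * g) x0 < s x0 := by
          have h2' := (hmono _ (inv_mem hsmG)) h2
          have e : ((s ^ m)⁻¹ : Equiv.Perm ℝ) ((s ^ (m + 1) : Equiv.Perm ℝ) x0) = s x0 := by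
            rw [← Equiv.Perm.mul_apply]
            congr 1
            rw [pow_succ, inv_mul_cancel_left]
          rw [e] at h2'
          simpa [Equiv.Perm.mul_apply] using h2'
        rcases ht1.lt_or_eq with hlt' | heq'
        · exact absurd (hsmin _ htG hlt') (not_le_of_gt ht2)
        · have : (s ^ m)⁻¹ * g = 1 :=
            fix_eq_one honefix hp htG hx0.ne' heq'.symm
          exact ⟨m, (inv_mul_eq_one.mp this).symm⟩
      obtain ⟨m, rfl⟩ := hpow a ha pa.le
      obtain ⟨n, rfl⟩ := hpow b hb pb.le
      have : (s ^ n : Equiv.Perm ℝ) * s ^ m = s ^ m * s ^ n := by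
        rw [← pow_add, ← pow_add, add_comm]
      rw [this] at hc
      exact lt_irrefl _ hc
    · -- no least positive element
      push_neg at hmin
      set c := (b * a)⁻¹ * (a * b) with hcdef
      have hbaG : b * a ∈ G := mul_mem hb ha
      have habG : a * b ∈ G := mul_mem ha hb
      have hcG : c ∈ G := mul_mem (inv_mem hbaG) habG
      have pc : x0 < c x0 := by
        have := (hmono _ (inv_mem hbaG)) hc
        simpa [hcdef, Equiv.Perm.mul_apply, Equiv.Perm.coe_inv, Equiv.symm_apply_apply] using this
      obtain ⟨k, hk, pk, hkc⟩ := hmin c hcG pc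
      -- find h' with (h'^2) x0 ≤ c x0
      obtain ⟨h', hh'G, ph', hsq⟩ : ∃ h' ∈ G, x0 < h' x0 ∧ (h' ^ 2 : Equiv.Perm ℝ) x0 ≤ c x0 := by
        have huG : k⁻¹ * c ∈ G := mul_mem (inv_mem hk) hcG
        have pu : x0 < (k⁻¹ * c) x0 := by
          have := (hmono _ (inv_mem hk)) hkc
          simpa [Equiv.Perm.mul_apply, Equiv.Perm.coe_inv, Equiv.symm_apply_apply] using this
        rcases le_or_gt (k x0) ((k⁻¹ * c) x0) with hle | hltu
        · refine ⟨k, hk, pk, ?_⟩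
          have h1 := (hmono k hk).monotone hle
          have e : k ((k⁻¹ * c) x0) = c x0 := by
            simp [Equiv.Perm.mul_apply, Equiv.Perm.coe_inv, Equiv.apply_symm_apply]
          rw [e] at h1
          calc (k ^ 2 : Equiv.Perm ℝ) x0 = k (k x0) := by
                rw [pow_two, Equiv.Perm.mul_apply]
            _ ≤ c x0 := h1
        · refine ⟨k⁻¹ * c, huG, pu, ?_⟩
          have hgx : (k⁻¹ * (k⁻¹ * c)) x0 ≤ x0 := by
            have := (hmono _ (inv_mem hk)).monotone hltu.le
            simpa [Equiv.Perm.mul_apply, Equiv.Perm.coe_inv, Equiv.symm_apply_apply] using this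
          have htr := transfer_le hcont honefix hp (mul_mem (inv_mem hk) huG) hx0
            (hx0.trans pu) hgx
          have h2 := (hmono k hk).monotone htr
          rw [Equiv.Perm.mul_apply, Equiv.Perm.coe_inv, Equiv.apply_symm_apply] at h2
          have e : k ((k⁻¹ * c) x0) = c x0 := by
            simp [Equiv.Perm.mul_apply, Equiv.Perm.coe_inv, Equiv.apply_symm_apply]
          rw [e] at h2
          calc ((k⁻¹ * c) ^ 2 : Equiv.Perm ℝ) x0 = (k⁻¹ * c) ((k⁻¹ * c) x0) := by
                rw [pow_two, Equiv.Perm.mul_apply]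
            _ ≤ c x0 := h2
      -- sandwiches for a and b
      obtain ⟨m, ha1, ha2⟩ := sandwich hmono hcont honefix hp hh'G hx0 ph' ha pa.le
      obtain ⟨n, hb1, hb2⟩ := sandwich hmono hcont honefix hp hh'G hx0 ph' hb pb.le
      have hpm : ∀ j : ℕ, p < (h' ^ j : Equiv.Perm ℝ) x0 := pow_pos_pt hmono hp hh'G hx0
      -- (h'^(n+m)) x0 ≤ (b*a) x0
      have s1 : (h' ^ n : Equiv.Perm ℝ) ((h' ^ m : Equiv.Perm ℝ) x0) ≤ b ((h' ^ m : Equiv.Perm ℝ) x0) := by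
        have hgx : (b⁻¹ * h' ^ n) x0 ≤ x0 := by
          have := (hmono b⁻¹ (inv_mem hb)).monotone hb1
          simpa [Equiv.Perm.mul_apply, Equiv.Perm.coe_inv, Equiv.symm_apply_apply] using this
        have htr := transfer_le hcont honefix hp (mul_mem (inv_mem hb) (pow_mem hh'G n)) hx0
          (hpm m) hgx
        have := (hmono b hb).monotone htr
        simpa [Equiv.Perm.mul_apply, Equiv.Perm.coe_inv, Equiv.apply_symm_apply] using this
      have s2 : (h' ^ (n + m) : Equiv.Perm ℝ) x0 ≤ (b * a) x0 := by
        calc (h' ^ (n + m) : Equiv.Perm ℝ) x0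
            = (h' ^ n : Equiv.Perm ℝ) ((h' ^ m : Equiv.Perm ℝ) x0) := (papp h' n m x0).symm
          _ ≤ b ((h' ^ m : Equiv.Perm ℝ) x0) := s1
          _ ≤ b (a x0) := (hmono b hb).monotone ha1
          _ = (b * a) x0 := (Equiv.Perm.mul_apply b a x0).symm
      -- transfer to y := (h'^2) x0
      set y := (h' ^ 2 : Equiv.Perm ℝ) x0 with hydef
      have hyp : p < y := hpm 2
      have s3 : (h' ^ (n + m) : Equiv.Perm ℝ) y ≤ (b * a) y := by
        have hgx : ((b * a)⁻¹ * h' ^ (n + m)) x0 ≤ x0 := by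
          have := (hmono _ (inv_mem hbaG)).monotone s2
          simpa [Equiv.Perm.mul_apply, Equiv.Perm.coe_inv, Equiv.symm_apply_apply] using this
        have htr := transfer_le hcont honefix hp
          (mul_mem (inv_mem hbaG) (pow_mem hh'G (n + m))) hx0 hyp hgx
        have := (hmono _ hbaG).monotone htr
        simpa [Equiv.Perm.mul_apply, Equiv.Perm.coe_inv, Equiv.apply_symm_apply] using this
      have s4 : (b * a) y ≤ (a * b) x0 := by
        have h1 := (hmono _ hbaG).monotone hsq
        have e : (b * a) (c x0) = (a * b) x0 := by
          simp [hcdef, Equiv.Perm.mul_apply, Equiv.Perm.coe_inv, Equiv.apply_symm_apply]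
        rwa [e] at h1
      have s5 : (a * b) x0 < (h' ^ (m + 1) : Equiv.Perm ℝ) ((h' ^ (n + 1) : Equiv.Perm ℝ) x0) := by
        have q1 : (a * b) x0 < a ((h' ^ (n + 1) : Equiv.Perm ℝ) x0) := by
          have := (hmono a ha) hb2
          simpa [Equiv.Perm.mul_apply] using this
        have q2 : a ((h' ^ (n + 1) : Equiv.Perm ℝ) x0)
            < (h' ^ (m + 1) : Equiv.Perm ℝ) ((h' ^ (n + 1) : Equiv.Perm ℝ) x0) := by
          have hgx : ((h' ^ (m + 1))⁻¹ * a) x0 < x0 := by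
            have := (hmono _ (inv_mem (pow_mem hh'G (m + 1)))) ha2
            simpa [Equiv.Perm.mul_apply, Equiv.Perm.coe_inv, Equiv.symm_apply_apply] using this
          have htr := transfer_lt hcont honefix hp
            (mul_mem (inv_mem (pow_mem hh'G (m + 1))) ha) hx0 (hpm (n + 1)) hgx
          have := (hmono _ (pow_mem hh'G (m + 1))) htr
          simpa [Equiv.Perm.mul_apply, Equiv.Perm.coe_inv, Equiv.apply_symm_apply] using this
        exact q1.trans q2
      have e2 : (h' ^ (n + m) : Equiv.Perm ℝ) y = (h' ^ (n + m + 2) : Equiv.Perm ℝ) x0 :=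
        papp h' (n + m) 2 x0
      have e3 : (h' ^ (m + 1) : Equiv.Perm ℝ) ((h' ^ (n + 1) : Equiv.Perm ℝ) x0)
          = (h' ^ (n + m + 2) : Equiv.Perm ℝ) x0 := by
        rw [papp h' (m + 1) (n + 1) x0, show m + 1 + (n + 1) = n + m + 2 from by omega]
      rw [e2] at s3
      rw [e3] at s5
      linarith
  intro a ha b hb pa pb
  have h1 := hlt a ha b hb pa pb
  have h2 := hlt b hb a ha pb pa
  have heq : (a * b) x0 = (b * a) x0 := le_antisymm (not_lt.mp h1) (not_lt.mp h2)
  have hfix : ((b * a)⁻¹ * (a * b)) x0 = x0 := by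
    rw [Equiv.Perm.mul_apply, heq, Equiv.Perm.coe_inv, Equiv.symm_apply_apply]
  have h1' : (b * a)⁻¹ * (a * b) = 1 :=
    fix_eq_one honefix hp (mul_mem (inv_mem (mul_mem hb ha)) (mul_mem ha hb)) hx0.ne' hfix
  exact (inv_mul_eq_one.mp h1').symm

end Solodov11

/-- A group of strictly increasing continuous bijections of `ℝ`, each nontrivial
element of which has at most one fixed point, with a global fixed point, is abelian. -/
theorem stmt_11 (G : Subgroup (Equiv.Perm ℝ))
    (hmono : ∀ g ∈ G, StrictMono (g : ℝ → ℝ))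
    (hcont : ∀ g ∈ G, Continuous (g : ℝ → ℝ))
    (honefix : ∀ g ∈ G, g ≠ 1 → ∀ x y : ℝ, g x = x → g y = y → x = y)
    (hglobal : ∃ p : ℝ, ∀ g ∈ G, g p = p) :
    ∀ g ∈ G, ∀ h ∈ G, g * h = h * g := by
  obtain ⟨p, hp⟩ := hglobal
  set x0 : ℝ := p + 1 with hx0def
  have hx0 : p < x0 := by rw [hx0def]; linarith
  have keyC : ∀ a ∈ G, ∀ b ∈ G, x0 < a x0 → x0 < b x0 → Commute a b :=
    fun a ha b hb pa pb => Solodov11.key hmono hcont honefix hp hx0 a ha b hb pa pb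
  have hbcases : ∀ b ∈ G, b = 1 ∨ x0 < b x0 ∨ x0 < b⁻¹ x0 := by
    intro b hb
    rcases lt_trichotomy (b x0) x0 with hlt | heq | hgt
    · right; right
      have := ((hmono b hb).lt_iff_lt (a := x0) (b := b⁻¹ x0))
      rw [Equiv.Perm.coe_inv, Equiv.apply_symm_apply] at this
      exact this.mp hlt
    · left; exact Solodov11.fix_eq_one honefix hp hb hx0.ne' heq
    · right; left; exact hgt
  have hcomm : ∀ a ∈ G, ∀ b ∈ G, x0 < a x0 → Commute a b := by
    intro a ha b hb pa
    rcases hbcases b hb with rfl | pb | pb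
    · exact Commute.one_right a
    · exact keyC a ha b hb pa pb
    · have := (keyC a ha b⁻¹ (inv_mem hb) pa pb).inv_right
      simpa using this
  intro g hg h hh
  rcases hbcases g hg with rfl | pg | pg
  · simp
  · exact (hcomm g hg h hh pg).eq
  · have := (hcomm g⁻¹ (inv_mem hg) h hh pg).inv_left
    simpa using this.eq
end

section
/- Let λ > 1 and let A : ℝ² → ℝ² be the linear map A(x, y) = (λ·x, λ⁻¹·y). Let T be a discrete subgroup of (ℝ², +) with T ≠ {0} and A(T) = T. Then T contains no nonzero element on either coordinate axis, and T contains two ℝ-linearly independent vectors; consequently T is a lattice, isomorphic to ℤ². -/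
open Module

/-- A nontrivial discrete subgroup of `ℝ²` invariant under the hyperbolic linear map
`(x,y) ↦ (λx, λ⁻¹y)`, `λ > 1`, meets the coordinate axes only at `0`, contains two
linearly independent vectors, and is a lattice isomorphic to `ℤ²`. -/
theorem stmt_14 (l : ℝ) (hl : 1 < l) (T : AddSubgroup (ℝ × ℝ))
    (hne : ∃ t ∈ T, t ≠ (0 : ℝ × ℝ))
    (hdisc : ∃ U : Set (ℝ × ℝ), IsOpen U ∧ (0 : ℝ × ℝ) ∈ U ∧
      ∀ t ∈ T, t ∈ U → t = (0 : ℝ × ℝ))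
    (hinv : (fun q : ℝ × ℝ => (l * q.1, l⁻¹ * q.2)) '' (T : Set (ℝ × ℝ)) = (T : Set (ℝ × ℝ))) :
    (∀ t ∈ T, t ≠ (0 : ℝ × ℝ) → t.1 ≠ 0 ∧ t.2 ≠ 0) ∧
    (∃ u ∈ T, ∃ v ∈ T, LinearIndependent ℝ ![u, v]) ∧
    Nonempty (T ≃+ (ℤ × ℤ)) := by
  have hl0 : (0 : ℝ) < l := lt_trans one_pos hl
  have hlne : l ≠ 0 := ne_of_gt hl0
  have hfwd : ∀ t ∈ T, ((l * t.1, l⁻¹ * t.2) : ℝ × ℝ) ∈ T := by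
    intro t ht
    have : ((l * t.1, l⁻¹ * t.2) : ℝ × ℝ) ∈ (fun q : ℝ × ℝ => (l * q.1, l⁻¹ * q.2)) ''
        (T : Set (ℝ × ℝ)) := ⟨t, ht, rfl⟩
    rw [hinv] at this; exact this
  have hbwd : ∀ t ∈ T, ((l⁻¹ * t.1, l * t.2) : ℝ × ℝ) ∈ T := by
    intro t ht
    have : t ∈ (fun q : ℝ × ℝ => (l * q.1, l⁻¹ * q.2)) '' (T : Set (ℝ × ℝ)) := by
      rw [hinv]; exact ht
    obtain ⟨s, hs, hst⟩ := this
    have h1 : l * s.1 = t.1 := congrArg Prod.fst hst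
    have h2 : l⁻¹ * s.2 = t.2 := congrArg Prod.snd hst
    have hs1 : s.1 = l⁻¹ * t.1 := by rw [← h1, ← mul_assoc, inv_mul_cancel₀ hlne, one_mul]
    have hs2 : s.2 = l * t.2 := by rw [← h2]; field_simp
    have : s = ((l⁻¹ * t.1, l * t.2) : ℝ × ℝ) := Prod.ext hs1 hs2
    rwa [this] at hs
  obtain ⟨U, hUopen, hU0, hUT⟩ := hdisc
  have hltend : Filter.Tendsto (fun n : ℕ => (l⁻¹ : ℝ) ^ n) Filter.atTop (nhds 0) := by
    apply tendsto_pow_atTop_nhds_zero_of_abs_lt_one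
    rw [abs_of_pos (inv_pos.mpr hl0)]
    exact inv_lt_one_of_one_lt₀ hl
  -- no nonzero element on the axes
  have haxes : ∀ t ∈ T, t ≠ (0 : ℝ × ℝ) → t.1 ≠ 0 ∧ t.2 ≠ 0 := by
    intro t ht htne
    constructor
    · intro h1
      -- t = (0, y); forward iterates (0, l⁻ⁿ y) → 0
      have hy : t.2 ≠ 0 := fun h2 => htne (Prod.ext h1 h2)
      have hiter : ∀ n : ℕ, ((0, (l⁻¹) ^ n * t.2) : ℝ × ℝ) ∈ T := by
        intro n
        induction n with
        | zero => simpa [← h1] using ht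
        | succ n ih =>
          have := hfwd _ ih
          simpa [pow_succ, mul_comm, mul_assoc, mul_left_comm] using this
      have htnd : Filter.Tendsto (fun n : ℕ => ((0, (l⁻¹) ^ n * t.2) : ℝ × ℝ))
          Filter.atTop (nhds (0 : ℝ × ℝ)) := by
        rw [show ((0 : ℝ × ℝ)) = ((0 : ℝ), (0 : ℝ) * t.2) by rw [zero_mul]; rfl]
        exact (tendsto_const_nhds).prodMk_nhds (hltend.mul_const t.2)
      have hev := htnd.eventually (hUopen.mem_nhds (by simpa using hU0))
      obtain ⟨n, hn⟩ := hev.exists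
      have := hUT _ (hiter n) hn
      have : (l⁻¹ : ℝ) ^ n * t.2 = 0 := congrArg Prod.snd this
      rcases mul_eq_zero.mp this with h | h
      · exact pow_ne_zero n (inv_ne_zero hlne) h
      · exact hy h
    · intro h2
      have hx : t.1 ≠ 0 := fun h1 => htne (Prod.ext h1 h2)
      have hiter : ∀ n : ℕ, (((l⁻¹) ^ n * t.1, 0) : ℝ × ℝ) ∈ T := by
        intro n
        induction n with
        | zero => simpa [← h2] using ht
        | succ n ih =>
          have := hbwd _ ih
          simpa [pow_succ, mul_comm, mul_assoc, mul_left_comm] using this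
      have htnd : Filter.Tendsto (fun n : ℕ => (((l⁻¹) ^ n * t.1, 0) : ℝ × ℝ))
          Filter.atTop (nhds (0 : ℝ × ℝ)) := by
        rw [show ((0 : ℝ × ℝ)) = ((0 : ℝ) * t.1, (0 : ℝ)) by rw [zero_mul]; rfl]
        exact (hltend.mul_const t.1).prodMk_nhds tendsto_const_nhds
      have hev := htnd.eventually (hUopen.mem_nhds (by simpa using hU0))
      obtain ⟨n, hn⟩ := hev.exists
      have := hUT _ (hiter n) hn
      have : (l⁻¹ : ℝ) ^ n * t.1 = 0 := congrArg Prod.fst this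
      rcases mul_eq_zero.mp this with h | h
      · exact pow_ne_zero n (inv_ne_zero hlne) h
      · exact hx h
  -- two linearly independent vectors
  obtain ⟨t, ht, htne⟩ := hne
  obtain ⟨hx, hy⟩ := haxes t ht htne
  have hAt : ((l * t.1, l⁻¹ * t.2) : ℝ × ℝ) ∈ T := hfwd t ht
  have hind : LinearIndependent ℝ ![t, ((l * t.1, l⁻¹ * t.2) : ℝ × ℝ)] := by
    rw [LinearIndependent.pair_iff]
    intro a b hab
    have h1 : a * t.1 + b * (l * t.1) = 0 := by
      have := congrArg Prod.fst hab; simpa [Prod.smul_def, smul_eq_mul] using this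
    have h2 : a * t.2 + b * (l⁻¹ * t.2) = 0 := by
      have := congrArg Prod.snd hab; simpa [Prod.smul_def, smul_eq_mul] using this
    have e1 : a + b * l = 0 := by
      have : (a + b * l) * t.1 = 0 := by ring_nf; ring_nf at h1; linarith
      rcases mul_eq_zero.mp this with h | h
      · exact h
      · exact absurd h hx
    have e2 : a + b * l⁻¹ = 0 := by
      have : (a + b * l⁻¹) * t.2 = 0 := by ring_nf; ring_nf at h2; linarith
      rcases mul_eq_zero.mp this with h | h
      · exact h
      · exact absurd h hy
    have hb : b = 0 := by
      have hll : l ≠ l⁻¹ := ne_of_gt (lt_trans (inv_lt_one_of_one_lt₀ hl) hl)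
      have : b * (l - l⁻¹) = 0 := by linarith
      rcases mul_eq_zero.mp this with h | h
      · exact h
      · exact absurd (by linarith : l = l⁻¹) hll
    refine ⟨?_, hb⟩
    rw [hb] at e1; linarith
  refine ⟨haxes, ⟨t, ht, _, hAt, hind⟩, ?_⟩
  -- the lattice structure
  set L : Submodule ℤ (ℝ × ℝ) := AddSubgroup.toIntSubmodule T with hL
  have hdiscL : DiscreteTopology L := by
    rw [discreteTopology_iff_isOpen_singleton_zero]
    have : ({0} : Set L) = (Subtype.val : L → ℝ × ℝ) ⁻¹' U := by
      ext x
      simp only [Set.mem_singleton_iff, Set.mem_preimage]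
      constructor
      · intro h; rw [h]; simpa using hU0
      · intro h
        exact Subtype.ext (hUT x.1 x.2 h)
    rw [this]
    exact hUopen.preimage continuous_subtype_val
  have hspan : Submodule.span ℝ (L : Set (ℝ × ℝ)) = ⊤ := by
    have hcard : Fintype.card (Fin 2) = finrank ℝ (ℝ × ℝ) := by
      simp [finrank_prod]
    have htop := hind.span_eq_top_of_card_eq_finrank hcard
    rw [eq_top_iff, ← htop]
    apply Submodule.span_mono
    intro x hx
    obtain ⟨i, rfl⟩ := hx
    fin_cases i
    · exact ht
    · exact hAt
  have hzlat : IsZLattice ℝ L := ⟨hspan⟩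
  have hfree : Module.Free ℤ L := ZLattice.module_free ℝ L
  have hfin : Module.Finite ℤ L := ZLattice.module_finite ℝ L
  have hrank : finrank ℤ L = 2 := by
    rw [ZLattice.rank ℝ L]; simp [finrank_prod]
  -- build the equivalence
  classical
  let b := Module.Free.chooseBasis ℤ L
  have hcardb : Fintype.card (Module.Free.ChooseBasisIndex ℤ L) = 2 := by
    rw [← finrank_eq_card_chooseBasisIndex, hrank]
  let b' : Basis (Fin 2) ℤ L := b.reindex (Fintype.equivFinOfCardEq hcardb)
  let e1 : L ≃ₗ[ℤ] (Fin 2 → ℤ) := b'.equivFun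
  let e2 : (Fin 2 → ℤ) ≃+ (ℤ × ℤ) :=
    { piFinTwoEquiv (fun _ => ℤ) with
      map_add' := fun f g => rfl }
  let e0 : T ≃+ L :=
    { toFun := fun x => ⟨x.1, x.2⟩
      invFun := fun x => ⟨x.1, x.2⟩
      left_inv := fun x => rfl
      right_inv := fun x => rfl
      map_add' := fun x y => rfl }
  exact ⟨e0.trans (e1.toAddEquiv.trans e2)⟩
end

section
/- Every group of homeomorphisms of ℝ acting freely (no nontrivial element has a fixed point) is abelian. -/
open Filter Topology

namespace Holder17

/-- A continuous map with a nonpositive and a nonnegative displacement has a fixed point. -/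
lemma exists_fixed {g : ℝ → ℝ} (hc : Continuous g) {u v : ℝ}
    (hu : g u ≤ u) (hv : v ≤ g v) : ∃ x, g x = x := by
  have hFc : Continuous fun x => g x - x := hc.sub continuous_id
  rcases le_total v u with h | h
  · have h0 : (0:ℝ) ∈ Set.Icc (g u - u) (g v - v) := ⟨by linarith, by linarith⟩
    obtain ⟨x, _, hx⟩ := intermediate_value_Icc' h hFc.continuousOn h0
    exact ⟨x, by simpa [sub_eq_zero] using hx⟩
  · have h0 : (0:ℝ) ∈ Set.Icc (g u - u) (g v - v) := ⟨by linarith, by linarith⟩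
    obtain ⟨x, _, hx⟩ := intermediate_value_Icc h hFc.continuousOn h0
    exact ⟨x, by simpa [sub_eq_zero] using hx⟩

variable {G : Subgroup (Equiv.Perm ℝ)}
  (hcont : ∀ g ∈ G, Continuous (g : ℝ → ℝ))
  (hfree : ∀ g ∈ G, g ≠ 1 → ∀ x : ℝ, g x ≠ x)

set_option linter.unusedSectionVars false

include hcont hfree

/-- An element of the group with a fixed point is the identity. -/
lemma eq_one_of_fixed {g : Equiv.Perm ℝ} (hg : g ∈ G) {x : ℝ} (hx : g x = x) : g = 1 := by
  by_contra h
  exact hfree g hg h x hx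

/-- Every member of the group is strictly increasing. -/
lemma strictMono_of_mem {g : Equiv.Perm ℝ} (hg : g ∈ G) : StrictMono (g : ℝ → ℝ) := by
  rcases (hcont g hg).strictMono_of_inj g.injective with h | h
  · exact h
  · exfalso
    have hg1 : g ≠ 1 := by
      rintro rfl
      have := h (show (0:ℝ) < 1 by norm_num)
      simp at this
      norm_num at this
    rcases le_total (g 0) 0 with h0 | h0
    · have hv : g 0 - 1 ≤ g (g 0 - 1) := by
        have h1 : g 0 - 1 < 0 := by linarith
        have := h h1
        linarith
      obtain ⟨x, hx⟩ := exists_fixed (hcont g hg) h0 hv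
      exact hfree g hg hg1 x hx
    · have hu : g (g 0 + 1) ≤ g 0 + 1 := by
        have h1 : (0:ℝ) < g 0 + 1 := by linarith
        have := h h1
        linarith
      obtain ⟨x, hx⟩ := exists_fixed (hcont g hg) hu h0
      exact hfree g hg hg1 x hx

/-- A nontrivial member displaces all points in the same direction. -/
lemma pos_or_neg {g : Equiv.Perm ℝ} (hg : g ∈ G) (hne : g ≠ 1) :
    (∀ x, x < g x) ∨ (∀ x, g x < x) := by
  by_contra hcon
  push_neg at hcon
  obtain ⟨⟨a, ha⟩, ⟨b, hb⟩⟩ := hcon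
  obtain ⟨x, hx⟩ := exists_fixed (hcont g hg) ha hb
  exact hfree g hg hne x hx

lemma pos_all {g : Equiv.Perm ℝ} (hg : g ∈ G) (h0 : 0 < g 0) : ∀ x, x < g x := by
  have hne : g ≠ 1 := by rintro rfl; simp at h0
  rcases pos_or_neg hcont hfree hg hne with h | h
  · exact h
  · exact absurd (h 0) (by linarith)

lemma lt_all {g h : Equiv.Perm ℝ} (hg : g ∈ G) (hh : h ∈ G) (h0 : g 0 < h 0) :
    ∀ x, g x < h x := by
  have hgm := strictMono_of_mem hcont hfree hg
  have hgim := strictMono_of_mem hcont hfree (G.inv_mem hg)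
  have h0' : 0 < (g⁻¹ * h) 0 := by
    have := hgim h0
    simpa using this
  intro x
  have h1 := pos_all hcont hfree (G.mul_mem (G.inv_mem hg) hh) h0' x
  have h2 := hgm h1
  simpa using h2

lemma le_all {g h : Equiv.Perm ℝ} (hg : g ∈ G) (hh : h ∈ G) (h0 : g 0 ≤ h 0) :
    ∀ x, g x ≤ h x := by
  rcases eq_or_lt_of_le h0 with he | hlt
  · have h1 : (g⁻¹ * h) 0 = 0 := by
      have : g⁻¹ (h 0) = g⁻¹ (g 0) := by rw [← he]
      simpa using this
    have h2 : g⁻¹ * h = 1 :=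
      eq_one_of_fixed hcont hfree (G.mul_mem (G.inv_mem hg) hh) h1
    have h3 : g = h := inv_mul_eq_one.mp h2
    subst h3
    exact fun x => le_rfl
  · exact fun x => (lt_all hcont hfree hg hh hlt x).le

lemma pow_pos_all {f : Equiv.Perm ℝ} (hf : ∀ x, x < f x) :
    ∀ (n : ℕ) (x : ℝ), x < (f ^ (n + 1)) x := by
  intro n
  induction n with
  | zero => simpa using hf
  | succ k ih =>
    intro x
    have h1 : (f ^ (k + 2)) x = f ((f ^ (k + 1)) x) := by
      rw [pow_succ']
      rfl
    rw [h1]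
    exact (ih x).trans (hf _)

lemma zpow_lt {f : Equiv.Perm ℝ} (hfG : f ∈ G) (hf : ∀ x, x < f x) {a b : ℤ}
    (hab : a < b) : (f ^ a) 0 < (f ^ b) 0 := by
  have hmono := strictMono_of_mem hcont hfree (G.zpow_mem hfG a)
  obtain ⟨k, hk⟩ : ∃ k : ℕ, b - a = (k : ℤ) + 1 := ⟨(b - a - 1).toNat, by omega⟩
  have hpow : f ^ (b - a) = f ^ (k + 1) := by
    rw [hk, show ((k : ℤ) + 1) = ((k + 1 : ℕ) : ℤ) by push_cast; ring, zpow_natCast]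
  have h0 : 0 < (f ^ (b - a)) 0 := by
    rw [hpow]; exact pow_pos_all hcont hfree hf k 0
  calc (f ^ a) 0 < (f ^ a) ((f ^ (b - a)) 0) := hmono h0
    _ = (f ^ b) 0 := by
        have he : f ^ b = f ^ a * f ^ (b - a) := by rw [← zpow_add]; ring_nf
        rw [he, Equiv.Perm.mul_apply]

lemma exists_pow_gt {f : Equiv.Perm ℝ} (hfG : f ∈ G) (hf : ∀ x, x < f x) (M : ℝ) :
    ∃ n : ℕ, M < (f ^ n) 0 := by
  by_contra hcon
  push_neg at hcon
  set a : ℕ → ℝ := fun n => (f ^ n) 0 with ha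
  have hsucc : ∀ n, a (n + 1) = f (a n) := by
    intro n
    show (f ^ (n + 1)) 0 = f ((f ^ n) 0)
    rw [pow_succ']
    rfl
  have hmono : Monotone a := monotone_nat_of_le_succ fun n => by
    rw [hsucc n]; exact (hf (a n)).le
  have hbdd : BddAbove (Set.range a) := ⟨M, by rintro y ⟨n, rfl⟩; exact hcon n⟩
  have hL := tendsto_atTop_ciSup hmono hbdd
  set L := ⨆ n, a n with hLdef
  have h1 : Tendsto (fun n => f (a n)) atTop (𝓝 (f L)) :=
    ((hcont f hfG).tendsto L).comp hL
  have h2 : Tendsto (fun n => f (a n)) atTop (𝓝 L) := by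
    have he : (fun n => f (a n)) = fun n => a (n + 1) := by
      funext n; rw [hsucc n]
    rw [he]
    exact hL.comp (tendsto_add_atTop_nat 1)
  have : f L = L := tendsto_nhds_unique h1 h2
  exact (hf L).ne' this

lemma exists_pow_lt {f : Equiv.Perm ℝ} (hfG : f ∈ G) (hf : ∀ x, f x < x) (M : ℝ) :
    ∃ n : ℕ, (f ^ n) 0 < M := by
  by_contra hcon
  push_neg at hcon
  set a : ℕ → ℝ := fun n => (f ^ n) 0 with ha
  have hsucc : ∀ n, a (n + 1) = f (a n) := by
    intro n
    show (f ^ (n + 1)) 0 = f ((f ^ n) 0)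
    rw [pow_succ']
    rfl
  have hmono : Antitone a := antitone_nat_of_succ_le fun n => by
    rw [hsucc n]; exact (hf (a n)).le
  have hbdd : BddBelow (Set.range a) := ⟨M, by rintro y ⟨n, rfl⟩; exact hcon n⟩
  have hL := tendsto_atTop_ciInf hmono hbdd
  set L := ⨅ n, a n with hLdef
  have h1 : Tendsto (fun n => f (a n)) atTop (𝓝 (f L)) :=
    ((hcont f hfG).tendsto L).comp hL
  have h2 : Tendsto (fun n => f (a n)) atTop (𝓝 L) := by
    have he : (fun n => f (a n)) = fun n => a (n + 1) := by
      funext n; rw [hsucc n]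
    rw [he]
    exact hL.comp (tendsto_add_atTop_nat 1)
  have : f L = L := tendsto_nhds_unique h1 h2
  exact (hf L).ne this

lemma window {f : Equiv.Perm ℝ} (hfG : f ∈ G) (hf : ∀ x, x < f x) (t : ℝ) :
    ∃ a : ℤ, (f ^ a) 0 ≤ t ∧ t < (f ^ (a + 1)) 0 := by
  obtain ⟨n, hn⟩ := exists_pow_gt hcont hfree hfG hf t
  have hinv : ∀ x, f⁻¹ x < x := fun x => by
    have := hf (f⁻¹ x)
    simpa using this
  obtain ⟨m, hm⟩ := exists_pow_lt hcont hfree (G.inv_mem hfG) hinv t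
  have Hbdd : ∃ b : ℤ, ∀ z : ℤ, (f ^ z) 0 ≤ t → z ≤ b := by
    refine ⟨n, fun z hz => ?_⟩
    by_contra hzz
    push_neg at hzz
    have h1 := zpow_lt hcont hfree hfG hf hzz
    rw [zpow_natCast] at h1
    linarith
  have Hinh : ∃ z : ℤ, (f ^ z) 0 ≤ t := by
    refine ⟨-(m : ℤ), ?_⟩
    rw [zpow_neg, zpow_natCast, ← inv_pow]
    exact hm.le
  obtain ⟨a, ha, hmax⟩ := Int.exists_greatest_of_bdd Hbdd Hinh
  refine ⟨a, ha, ?_⟩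
  by_contra hcon
  push_neg at hcon
  have := hmax (a + 1) hcon
  omega

/-- The commutator bound: for any positive `f` and any `g, h` in the group,
the commutator `g⁻¹h⁻¹gh` moves `0` by less than `f²` does. -/
lemma comm_lt {g h f : Equiv.Perm ℝ} (hg : g ∈ G) (hh : h ∈ G) (hfG : f ∈ G)
    (hf : ∀ x, x < f x) : (g⁻¹ * h⁻¹ * g * h) 0 < f (f 0) := by
  obtain ⟨a, ha1, ha2⟩ := window hcont hfree hfG hf (g 0)
  obtain ⟨b, hb1, hb2⟩ := window hcont hfree hfG hf (h 0)
  have hga : ∀ x, (f ^ a) x ≤ g x := le_all hcont hfree (G.zpow_mem hfG a) hg ha1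
  have hga2 : ∀ x, g x < (f ^ (a + 1)) x :=
    lt_all hcont hfree hg (G.zpow_mem hfG (a + 1)) ha2
  have hhb : ∀ x, (f ^ b) x ≤ h x := le_all hcont hfree (G.zpow_mem hfG b) hh hb1
  have hhb2 : ∀ x, h x < (f ^ (b + 1)) x :=
    lt_all hcont hfree hh (G.zpow_mem hfG (b + 1)) hb2
  have hmh := strictMono_of_mem hcont hfree hh
  have hhgG : h * g ∈ G := G.mul_mem hh hg
  have hmhg_inv := strictMono_of_mem hcont hfree (G.inv_mem hhgG)
  -- `g (h 0) < (f ^ (a + b + 2)) 0`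
  have key1 : g (h 0) < (f ^ (a + b + 2)) 0 := by
    have s1 : g (h 0) < (f ^ (a + 1)) (h 0) := hga2 _
    have s2 : (f ^ (a + 1)) (h 0) < (f ^ (a + 1)) ((f ^ (b + 1)) 0) :=
      (strictMono_of_mem hcont hfree (G.zpow_mem hfG (a + 1))) (hhb2 0)
    have s3 : (f ^ (a + 1)) ((f ^ (b + 1)) 0) = (f ^ (a + b + 2)) 0 := by
      have he : f ^ (a + b + 2) = f ^ (a + 1) * f ^ (b + 1) := by
        rw [← zpow_add]; ring_nf
      rw [he, Equiv.Perm.mul_apply]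
    linarith
  -- `f ^ (a + b) ≤ h * g` pointwise
  have key2 : ∀ x, (f ^ (a + b)) x ≤ (h * g) x := by
    apply le_all hcont hfree (G.zpow_mem hfG (a + b)) hhgG
    have s1 : (f ^ (a + b)) 0 = (f ^ b) ((f ^ a) 0) := by
      have he : f ^ (a + b) = f ^ b * f ^ a := by rw [← zpow_add]; ring_nf
      rw [he, Equiv.Perm.mul_apply]
    have s2 : (f ^ b) ((f ^ a) 0) ≤ h ((f ^ a) 0) := hhb _
    have s3 : h ((f ^ a) 0) ≤ h (g 0) := hmh.monotone ha1
    have s4 : (h * g) 0 = h (g 0) := Equiv.Perm.mul_apply _ _ _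
    rw [s4, s1]
    linarith
  have c_eq : (g⁻¹ * h⁻¹ * g * h) 0 = (h * g)⁻¹ (g (h 0)) := by
    simp [Equiv.Perm.mul_apply, mul_inv_rev]
  rw [c_eq]
  have s4 : (h * g)⁻¹ (g (h 0)) < (h * g)⁻¹ ((f ^ (a + b + 2)) 0) := hmhg_inv key1
  have s5 : (h * g)⁻¹ ((f ^ (a + b + 2)) 0) ≤ f (f 0) := by
    have e1 : (f ^ (a + b + 2)) 0 = (f ^ (a + b)) (f (f 0)) := by
      have he : f ^ (a + b + 2) = f ^ (a + b) * (f * f) := by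
        rw [show f * f = f ^ (2:ℤ) from (zpow_two f).symm, ← zpow_add]
      rw [he, Equiv.Perm.mul_apply, Equiv.Perm.mul_apply]
    have e2 : (f ^ (a + b + 2)) 0 ≤ (h * g) (f (f 0)) := by
      rw [e1]; exact key2 _
    calc (h * g)⁻¹ ((f ^ (a + b + 2)) 0) ≤ (h * g)⁻¹ ((h * g) (f (f 0))) :=
          hmhg_inv.monotone e2
      _ = f (f 0) := by simp
  linarith

/-- No commutator can be positive. -/
lemma key {g h : Equiv.Perm ℝ} (hg : g ∈ G) (hh : h ∈ G)
    (hc0 : 0 < (g⁻¹ * h⁻¹ * g * h) 0) : False := by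
  set c : Equiv.Perm ℝ := g⁻¹ * h⁻¹ * g * h with hcdef
  have hcG : c ∈ G := G.mul_mem (G.mul_mem (G.mul_mem (G.inv_mem hg) (G.inv_mem hh)) hg) hh
  have hcpos : ∀ x, x < c x := pos_all hcont hfree hcG hc0
  by_cases hleast : ∃ z ∈ G, (∀ x, x < z x) ∧ ∀ u ∈ G, (∀ x, x < u x) → z 0 ≤ u 0
  · -- discrete case: everything is a power of the least positive element `z`
    obtain ⟨z, hzG, hz, hzmin⟩ := hleast
    have hpow : ∀ k ∈ G, ∃ a : ℤ, k = z ^ a := by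
      intro k hk
      obtain ⟨a, ha1, ha2⟩ := window hcont hfree hzG hz (k 0)
      refine ⟨a, ?_⟩
      by_contra hne2
      set u : Equiv.Perm ℝ := (z ^ a)⁻¹ * k with hudef
      have huG : u ∈ G := G.mul_mem (G.inv_mem (G.zpow_mem hzG a)) hk
      have hmzi := strictMono_of_mem hcont hfree (G.inv_mem (G.zpow_mem hzG a))
      have hu1 : u ≠ 1 := by
        intro h1
        exact hne2 (inv_mul_eq_one.mp h1).symm
      have huapp : u 0 = (z ^ a)⁻¹ (k 0) := Equiv.Perm.mul_apply _ _ _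
      have hu0 : 0 < u 0 := by
        have hge : 0 ≤ u 0 := by
          have := hmzi.monotone ha1
          rw [huapp]
          simpa using this
        rcases eq_or_lt_of_le hge with heq | hlt
        · exact absurd (eq_one_of_fixed hcont hfree huG heq.symm) hu1
        · exact hlt
      have hupos : ∀ x, x < u x := pos_all hcont hfree huG hu0
      have hzu := hzmin u huG hupos
      have hult : u 0 < z 0 := by
        have e : (z ^ (a + 1)) 0 = (z ^ a) (z 0) := by
          have he : z ^ (a + 1) = z ^ a * z := zpow_add_one z a
          rw [he, Equiv.Perm.mul_apply]
        have := hmzi ha2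
        rw [huapp]
        rw [e] at this
        simpa using this
      linarith
    obtain ⟨a, hka⟩ := hpow g hg
    obtain ⟨b, hkb⟩ := hpow h hh
    have hcomm : g * h = h * g := by
      rw [hka, hkb, ← zpow_add, ← zpow_add, add_comm]
    have hc1 : c = 1 := by
      rw [hcdef, hka, hkb, ← zpow_neg, ← zpow_neg, ← zpow_add, ← zpow_add, ← zpow_add,
        show -a + -b + a + b = 0 by ring, zpow_zero]
    rw [hc1] at hc0
    simp at hc0
  · push_neg at hleast
    obtain ⟨α, hαG, hαpos, hα0⟩ := hleast c hcG hcpos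
    set γ : Equiv.Perm ℝ := α⁻¹ * c with hγdef
    have hγG : γ ∈ G := G.mul_mem (G.inv_mem hαG) hcG
    have hmαi := strictMono_of_mem hcont hfree (G.inv_mem hαG)
    have hmα := strictMono_of_mem hcont hfree hαG
    have hγapp : γ 0 = α⁻¹ (c 0) := Equiv.Perm.mul_apply _ _ _
    have hγ0 : 0 < γ 0 := by
      have := hmαi hα0
      rw [hγapp]
      simpa using this
    have hαγ : α (γ 0) = c 0 := by
      rw [hγapp]
      simp
    rcases le_or_gt (α 0) (γ 0) with hle | hlt
    · have hbound := comm_lt hcont hfree hg hh hαG hαpos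
      have h1 : α (α 0) ≤ α (γ 0) := hmα.monotone hle
      rw [hαγ] at h1
      rw [← hcdef] at hbound
      linarith
    · have hγpos : ∀ x, x < γ x := pos_all hcont hfree hγG hγ0
      have hbound := comm_lt hcont hfree hg hh hγG hγpos
      have h1 : γ (γ 0) < α (γ 0) := lt_all hcont hfree hγG hαG hlt (γ 0)
      rw [hαγ] at h1
      rw [← hcdef] at hbound
      linarith

end Holder17

/-- Hölder's theorem: every group of homeomorphisms of `ℝ` acting freely is abelian.
A group of homeomorphisms of `ℝ` is formalized as a subgroup of the group of
bijections of `ℝ` all of whose members are continuous (hence each member is a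
homeomorphism, its inverse lying in the group). -/
theorem stmt_17 (G : Subgroup (Equiv.Perm ℝ))
    (hcont : ∀ g ∈ G, Continuous (g : ℝ → ℝ))
    (hfree : ∀ g ∈ G, g ≠ 1 → ∀ x : ℝ, g x ≠ x) :
    ∀ g ∈ G, ∀ h ∈ G, g * h = h * g := by
  intro g hg h hh
  by_contra hne
  set c : Equiv.Perm ℝ := g⁻¹ * h⁻¹ * g * h with hcdef
  have hcG : c ∈ G := G.mul_mem (G.mul_mem (G.mul_mem (G.inv_mem hg) (G.inv_mem hh)) hg) hh
  have hc1 : c ≠ 1 := by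
    intro h1
    apply hne
    have : g⁻¹ * h⁻¹ * g * h = 1 := h1
    calc g * h = (h * g) * (g⁻¹ * h⁻¹ * g * h) := by group
      _ = h * g := by rw [this, mul_one]
  have hc0ne : c 0 ≠ 0 := hfree c hcG hc1 0
  rcases lt_or_gt_of_ne hc0ne with hneg | hpos
  · -- use the commutator of the pair `(h, g)`, which is `c⁻¹`
    have hinv : h⁻¹ * g⁻¹ * h * g = c⁻¹ := by rw [hcdef]; group
    have hmc := Holder17.strictMono_of_mem hcont hfree hcG
    have hpos' : 0 < (h⁻¹ * g⁻¹ * h * g) 0 := by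
      rw [hinv]
      have h1 : c 0 < c (c⁻¹ 0) := by simpa using hneg
      exact hmc.lt_iff_lt.mp h1
    exact Holder17.key hcont hfree hh hg hpos'
  · exact Holder17.key hcont hfree hg hh hpos
end
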